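/- For $\sigma\in S_n$, $\sigma\ne e$, set $a_\sigma=(p(\sigma),\, 2t(\sigma)/(n-p(\sigma)))\in\mathbb{R}^2$ and let $P$ be the convex hull of all such points. If $n\ge 5$ is odd, the extreme points of $P$ are exactly $(0,0)$, $(n-3,0)$, $(n-2,1)$, $(0,(n-3)/n)$ and $(1,1)$. -/

import Mathlib

def numFixedPoints {n : ℕ} (σ : Equiv.Perm (Fin n)) : ℕ :=
  (Finset.univ.filter (fun i : Fin n => σ i = i)).card

def numTwoCycles {n : ℕ} (σ : Equiv.Perm (Fin n)) : ℕ :=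
  (Finset.univ.filter (fun x : Fin n × Fin n =>
      x.1 < x.2 ∧ σ x.1 = x.2 ∧ σ x.2 = x.1)).card

def Tset {n : ℕ} (σ : Equiv.Perm (Fin n)) : Finset (Fin n) :=
  Finset.univ.filter (fun i => σ i ≠ i ∧ σ (σ i) = i)

def Lset {n : ℕ} (σ : Equiv.Perm (Fin n)) : Finset (Fin n) :=
  Finset.univ.filter (fun i => σ i ≠ i ∧ σ (σ i) ≠ i)

lemma card_Tset {n : ℕ} (σ : Equiv.Perm (Fin n)) :
    (Tset σ).card = 2 * numTwoCycles σ := by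
  classical
  set P := Finset.univ.filter (fun x : Fin n × Fin n =>
      x.1 < x.2 ∧ σ x.1 = x.2 ∧ σ x.2 = x.1) with hP
  have hT : Tset σ = P.biUnion (fun pr => {pr.1, pr.2}) := by
    ext i
    simp only [Tset, Finset.mem_filter, Finset.mem_univ, true_and, Finset.mem_biUnion,
      hP, Finset.mem_insert, Finset.mem_singleton]
    constructor
    · rintro ⟨hne, hsq⟩
      rcases lt_or_gt_of_ne hne with h | h
      · exact ⟨(σ i, i), by simp [h, hsq], Or.inr rfl⟩
      · exact ⟨(i, σ i), by simp [h, hsq], Or.inl rfl⟩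
    · rintro ⟨pr, hpr, hi⟩
      obtain ⟨hlt, h1, h2⟩ := hpr
      rcases hi with rfl | rfl
      · exact ⟨by rw [h1]; exact (ne_of_lt hlt).symm, by rw [h1, h2]⟩
      · exact ⟨by rw [h2]; exact (ne_of_lt hlt), by rw [h2, h1]⟩
  have hdisj : ∀ p ∈ P, ∀ q ∈ P, p ≠ q →
      Disjoint ({p.1, p.2} : Finset (Fin n)) {q.1, q.2} := by
    intro p hp q hq hpq
    simp only [hP, Finset.mem_filter] at hp hq
    obtain ⟨-, hl1, ha1, hb1⟩ := hp
    obtain ⟨-, hl2, ha2, hb2⟩ := hq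
    rw [Finset.disjoint_left]
    rintro i hip hiq
    simp only [Finset.mem_insert, Finset.mem_singleton] at hip hiq
    apply hpq
    rcases hip with rfl | rfl <;> rcases hiq with h | h
    · exact Prod.ext h (by rw [← ha1, h, ha2])
    · exfalso
      have h2 : p.2 = q.1 := by rw [← ha1, h, hb2]
      exact lt_irrefl _ (((hl2.trans_eq h.symm).trans hl1).trans_eq h2)
    · exfalso
      have h2 : p.1 = q.2 := by rw [← hb1, h, ha2]
      exact lt_irrefl _ (((hl1.trans_eq h).trans hl2).trans_eq h2.symm)
    · exact Prod.ext (by rw [← hb1, h, hb2]) h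
  rw [hT, Finset.card_biUnion hdisj]
  have : ∀ p ∈ P, ({p.1, p.2} : Finset (Fin n)).card = 2 := by
    intro p hp
    simp only [hP, Finset.mem_filter] at hp
    rw [Finset.card_insert_of_notMem (by simp [(ne_of_lt hp.2.1)]), Finset.card_singleton]
  rw [Finset.sum_congr rfl this, Finset.sum_const, smul_eq_mul, numTwoCycles, mul_comm]

lemma partition_card {n : ℕ} (σ : Equiv.Perm (Fin n)) :
    numFixedPoints σ + (Tset σ).card + (Lset σ).card = n := by
  classical
  have h1 := Finset.card_filter_add_card_filter_not
    (s := (Finset.univ : Finset (Fin n))) (p := fun i => σ i = i)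
  have h2 := Finset.card_filter_add_card_filter_not
    (s := Finset.univ.filter (fun i : Fin n => ¬ σ i = i)) (p := fun i => σ (σ i) = i)
  rw [Finset.filter_filter, Finset.filter_filter] at h2
  have hTeq : Tset σ = Finset.univ.filter (fun i => ¬σ i = i ∧ σ (σ i) = i) := rfl
  have hLeq : Lset σ = Finset.univ.filter (fun i => ¬σ i = i ∧ ¬σ (σ i) = i) := rfl
  rw [hTeq, hLeq]
  unfold numFixedPoints
  simp only [Finset.card_univ, Fintype.card_fin] at h1
  omega

lemma Lset_mem_map {n : ℕ} (σ : Equiv.Perm (Fin n)) {i : Fin n} (hi : i ∈ Lset σ) :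
    σ i ∈ Lset σ ∧ σ i ≠ i := by
  simp only [Lset, Finset.mem_filter, Finset.mem_univ, true_and] at hi ⊢
  obtain ⟨h1, h2⟩ := hi
  refine ⟨⟨fun h => h1 (σ.injective h), fun h => h2 (σ.injective h)⟩, h1⟩

lemma Lset_card {n : ℕ} (σ : Equiv.Perm (Fin n)) :
    (Lset σ).card = 0 ∨ 3 ≤ (Lset σ).card := by
  by_contra h
  push_neg at h
  obtain ⟨h0, h3⟩ := h
  interval_cases hc : (Lset σ).card
  · omega
  · obtain ⟨x, hx⟩ := Finset.card_eq_one.mp hc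
    have hxm : x ∈ Lset σ := by rw [hx]; exact Finset.mem_singleton_self x
    obtain ⟨hσx, hne⟩ := Lset_mem_map σ hxm
    rw [hx, Finset.mem_singleton] at hσx
    exact hne hσx
  · obtain ⟨x, y, hxy, hx⟩ := Finset.card_eq_two.mp hc
    have hxm : x ∈ Lset σ := by rw [hx]; simp
    have hym : y ∈ Lset σ := by rw [hx]; simp
    obtain ⟨hσx, hnex⟩ := Lset_mem_map σ hxm
    rw [hx, Finset.mem_insert, Finset.mem_singleton] at hσx
    have hσxy : σ x = y := hσx.resolve_left hnex
    obtain ⟨hσy, hney⟩ := Lset_mem_map σ hym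
    rw [hx, Finset.mem_insert, Finset.mem_singleton] at hσy
    have hσyx : σ y = x := hσy.resolve_right hney
    simp only [Lset, Finset.mem_filter, Finset.mem_univ, true_and] at hxm
    exact hxm.2 (by rw [hσxy, hσyx])

lemma fixed_le {n : ℕ} (σ : Equiv.Perm (Fin n)) (hσ : σ ≠ 1) :
    numFixedPoints σ + 2 ≤ n := by
  have hpart := partition_card σ
  have hL := Lset_card σ
  have hcT := card_Tset σ
  rcases Nat.eq_zero_or_pos (numTwoCycles σ) with ht | ht
  · -- then Tset empty, Lset must be ≥ 3 or σ = 1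
    rcases hL with h0 | h3
    · exfalso
      have hTe : Tset σ = ∅ := Finset.card_eq_zero.mp (by omega)
      have hLe : Lset σ = ∅ := Finset.card_eq_zero.mp h0
      have hall : ∀ i, σ i = i := by
        intro i
        by_contra hi
        have : i ∈ Tset σ ∨ i ∈ Lset σ := by
          simp only [Tset, Lset, Finset.mem_filter, Finset.mem_univ, true_and]
          by_cases h : σ (σ i) = i
          · exact Or.inl ⟨hi, h⟩
          · exact Or.inr ⟨hi, h⟩
        rcases this with h | h
        · rw [hTe] at h; exact absurd h (Finset.notMem_empty i)
        · rw [hLe] at h; exact absurd h (Finset.notMem_empty i)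
      exact hσ (Equiv.ext fun i => by rw [hall i, Equiv.Perm.one_apply])
    · omega
  · omega

lemma card_filter_val_lt (n a : ℕ) (h : a ≤ n) :
    (Finset.univ.filter (fun i : Fin n => (i : ℕ) < a)).card = a := by
  rcases Nat.lt_or_ge a n with h' | h'
  · have he : (Finset.univ.filter (fun i : Fin n => (i : ℕ) < a)) = Finset.Iio ⟨a, h'⟩ := by
      ext i
      simp [Finset.mem_Iio, Fin.lt_def]
    rw [he, Fin.card_Iio]
  · have han : a = n := le_antisymm h h'
    subst han
    have he : (Finset.univ.filter (fun i : Fin a => (i : ℕ) < a)) = Finset.univ := by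
      ext i; simp [i.isLt]
    rw [he, Finset.card_univ, Fintype.card_fin]

def mkPerm (n : ℕ) (f g : ℕ → ℕ) (hf : ∀ j < n, f j < n) (hg : ∀ j < n, g j < n)
    (hgf : ∀ j < n, g (f j) = j) (hfg : ∀ j < n, f (g j) = j) : Equiv.Perm (Fin n) where
  toFun := fun i => ⟨f i, hf i i.isLt⟩
  invFun := fun i => ⟨g i, hg i i.isLt⟩
  left_inv := fun i => Fin.ext (hgf i i.isLt)
  right_inv := fun i => Fin.ext (hfg i i.isLt)

lemma mkPerm_apply {n : ℕ} {f g : ℕ → ℕ} {hf hg hgf hfg} (i : Fin n) :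
    (mkPerm n f g hf hg hgf hfg) i = ⟨f i, hf i i.isLt⟩ := rfl

lemma numFixedPoints_mkPerm {n : ℕ} {f g : ℕ → ℕ} {hf hg hgf hfg} :
    numFixedPoints (mkPerm n f g hf hg hgf hfg) =
      (Finset.univ.filter (fun i : Fin n => f i = (i : ℕ))).card := by
  unfold numFixedPoints
  congr 1
  apply Finset.filter_congr
  intro i _
  rw [mkPerm_apply, Fin.ext_iff]

lemma Tset_mkPerm {n : ℕ} {f g : ℕ → ℕ} {hf hg hgf hfg} :
    Tset (mkPerm n f g hf hg hgf hfg) =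
      Finset.univ.filter (fun i : Fin n => f i ≠ (i : ℕ) ∧ f (f i) = (i : ℕ)) := by
  unfold Tset
  apply Finset.filter_congr
  intro i _
  simp only [mkPerm_apply, Ne, Fin.ext_iff]

/-- pairing function: swaps 2i and 2i+1 for i < m -/
def pf (m j : ℕ) : ℕ := if j < 2*m then (if j % 2 = 0 then j + 1 else j - 1) else j

lemma pf_lt {n m : ℕ} (h : 2*m ≤ n) : ∀ j < n, pf m j < n := by
  intro j hj; unfold pf; split_ifs <;> first | omega | exact ‹False›.elim

lemma pf_invol (m : ℕ) : ∀ j, pf m (pf m j) = j := by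
  intro j; unfold pf; split_ifs <;> first | omega | exact ‹False›.elim

lemma pf_fix (m j : ℕ) : pf m j = j ↔ ¬ j < 2*m := by
  unfold pf; split_ifs <;> first | omega | exact ‹False›.elim

def pairPerm (n m : ℕ) (h : 2*m ≤ n) : Equiv.Perm (Fin n) :=
  mkPerm n (pf m) (pf m) (pf_lt h) (pf_lt h)
    (fun j _ => pf_invol m j) (fun j _ => pf_invol m j)

lemma numFixedPoints_pairPerm (n m : ℕ) (h : 2*m ≤ n) :
    numFixedPoints (pairPerm n m h) = n - 2*m := by
  unfold pairPerm
  rw [numFixedPoints_mkPerm]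
  have : (Finset.univ.filter (fun i : Fin n => pf m i = (i:ℕ))) =
      (Finset.univ.filter (fun i : Fin n => (i:ℕ) < 2*m))ᶜ := by
    ext i
    simp [pf_fix]
  rw [this, Finset.card_compl, card_filter_val_lt n _ h, Fintype.card_fin]

lemma card_Tset_pairPerm (n m : ℕ) (h : 2*m ≤ n) :
    (Tset (pairPerm n m h)).card = 2*m := by
  unfold pairPerm
  rw [Tset_mkPerm]
  have : (Finset.univ.filter (fun i : Fin n => pf m i ≠ (i:ℕ) ∧ pf m (pf m i) = (i:ℕ))) =
      (Finset.univ.filter (fun i : Fin n => (i:ℕ) < 2*m)) := by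
    apply Finset.filter_congr
    intro i _
    simp [pf_invol, pf_fix]
  rw [this, card_filter_val_lt n _ h]

/-- 3-cycle on n-3, n-2, n-1 -/
def c3 (n j : ℕ) : ℕ :=
  if j = n-3 then n-2 else if j = n-2 then n-1 else if j = n-1 then n-3 else j

def c3' (n j : ℕ) : ℕ :=
  if j = n-3 then n-1 else if j = n-2 then n-3 else if j = n-1 then n-2 else j

lemma c3_lt {n : ℕ} (h : 3 ≤ n) : ∀ j < n, c3 n j < n := by
  intro j hj; unfold c3; split_ifs <;> first | omega | exact ‹False›.elim

lemma c3'_lt {n : ℕ} (h : 3 ≤ n) : ∀ j < n, c3' n j < n := by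
  intro j hj; unfold c3'; split_ifs <;> first | omega | exact ‹False›.elim

lemma c3_inv {n : ℕ} (h : 3 ≤ n) : ∀ j < n, c3' n (c3 n j) = j := by
  intro j hj; unfold c3 c3'; split_ifs <;> first | omega | exact ‹False›.elim

lemma c3_inv' {n : ℕ} (h : 3 ≤ n) : ∀ j < n, c3 n (c3' n j) = j := by
  intro j hj; unfold c3 c3'; split_ifs <;> first | omega | exact ‹False›.elim

def cyc3 (n : ℕ) (h : 3 ≤ n) : Equiv.Perm (Fin n) :=
  mkPerm n (c3 n) (c3' n) (c3_lt h) (c3'_lt h) (c3_inv h) (c3_inv' h)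

lemma numFixedPoints_cyc3 (n : ℕ) (h : 3 ≤ n) :
    numFixedPoints (cyc3 n h) = n - 3 := by
  unfold cyc3
  rw [numFixedPoints_mkPerm]
  have : (Finset.univ.filter (fun i : Fin n => c3 n i = (i:ℕ))) =
      (Finset.univ.filter (fun i : Fin n => (i:ℕ) < n-3)) := by
    apply Finset.filter_congr
    intro i _
    have := i.isLt
    unfold c3; split_ifs <;> first | omega | exact ‹False›.elim
  rw [this, card_filter_val_lt n _ (by omega)]

lemma card_Tset_cyc3 (n : ℕ) (h : 3 ≤ n) : (Tset (cyc3 n h)).card = 0 := by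
  unfold cyc3
  rw [Tset_mkPerm, Finset.card_eq_zero]
  rw [Finset.filter_eq_empty_iff]
  intro i _
  have := i.isLt
  unfold c3
  split_ifs <;> first | omega | exact ‹False›.elim

/-- the n-cycle -/
def rf (n j : ℕ) : ℕ := if j = n-1 then 0 else j+1
def rf' (n j : ℕ) : ℕ := if j = 0 then n-1 else j-1

lemma rf_lt {n : ℕ} (h : 1 ≤ n) : ∀ j < n, rf n j < n := by
  intro j hj; unfold rf; split_ifs <;> first | omega | exact ‹False›.elim
lemma rf'_lt {n : ℕ} (h : 1 ≤ n) : ∀ j < n, rf' n j < n := by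
  intro j hj; unfold rf'; split_ifs <;> first | omega | exact ‹False›.elim
lemma rf_inv {n : ℕ} (h : 1 ≤ n) : ∀ j < n, rf' n (rf n j) = j := by
  intro j hj; unfold rf rf'; split_ifs <;> first | omega | exact ‹False›.elim
lemma rf_inv' {n : ℕ} (h : 1 ≤ n) : ∀ j < n, rf n (rf' n j) = j := by
  intro j hj; unfold rf rf'; split_ifs <;> first | omega | exact ‹False›.elim

def rotPerm (n : ℕ) (h : 1 ≤ n) : Equiv.Perm (Fin n) :=
  mkPerm n (rf n) (rf' n) (rf_lt h) (rf'_lt h) (rf_inv h) (rf_inv' h)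

lemma numFixedPoints_rotPerm (n : ℕ) (h : 2 ≤ n) (h1 : 1 ≤ n) :
    numFixedPoints (rotPerm n h1) = 0 := by
  unfold rotPerm
  rw [numFixedPoints_mkPerm, Finset.card_eq_zero, Finset.filter_eq_empty_iff]
  intro i _
  have := i.isLt
  unfold rf; split_ifs <;> first | omega | exact ‹False›.elim

lemma card_Tset_rotPerm (n : ℕ) (h : 3 ≤ n) (h1 : 1 ≤ n) :
    (Tset (rotPerm n h1)).card = 0 := by
  unfold rotPerm
  rw [Tset_mkPerm, Finset.card_eq_zero, Finset.filter_eq_empty_iff]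
  intro i _
  have := i.isLt
  unfold rf; split_ifs <;> first | omega | exact ‹False›.elim

/-- 3-cycle at top combined with pairing below: n odd, pairs on [0, n-3) -/
def df (n j : ℕ) : ℕ := if j < n-3 then pf ((n-3)/2) j else c3 n j
def df' (n j : ℕ) : ℕ := if j < n-3 then pf ((n-3)/2) j else c3' n j

lemma df_lt {n : ℕ} (h : 5 ≤ n) (ho : Odd n) : ∀ j < n, df n j < n := by
  intro j hj; unfold df pf c3; split_ifs <;> first | omega | exact ‹False›.elim

lemma df'_lt {n : ℕ} (h : 5 ≤ n) (ho : Odd n) : ∀ j < n, df' n j < n := by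
  intro j hj; unfold df' pf c3'; split_ifs <;> first | omega | exact ‹False›.elim

lemma df_inv {n : ℕ} (h : 5 ≤ n) (ho : Odd n) : ∀ j < n, df' n (df n j) = j := by
  intro j hj
  obtain ⟨k, hk⟩ := ho
  unfold df df' pf c3 c3'; split_ifs <;> first | omega | exact ‹False›.elim

lemma df_inv' {n : ℕ} (h : 5 ≤ n) (ho : Odd n) : ∀ j < n, df n (df' n j) = j := by
  intro j hj
  obtain ⟨k, hk⟩ := ho
  unfold df df' pf c3 c3'; split_ifs <;> first | omega | exact ‹False›.elim

def dPerm (n : ℕ) (h : 5 ≤ n) (ho : Odd n) : Equiv.Perm (Fin n) :=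
  mkPerm n (df n) (df' n) (df_lt h ho) (df'_lt h ho) (df_inv h ho) (df_inv' h ho)

lemma numFixedPoints_dPerm (n : ℕ) (h : 5 ≤ n) (ho : Odd n) :
    numFixedPoints (dPerm n h ho) = 0 := by
  unfold dPerm
  rw [numFixedPoints_mkPerm, Finset.card_eq_zero, Finset.filter_eq_empty_iff]
  intro i _
  have := i.isLt
  obtain ⟨k, hk⟩ := ho
  unfold df pf c3; split_ifs <;> first | omega | exact ‹False›.elim

lemma card_Tset_dPerm (n : ℕ) (h : 5 ≤ n) (ho : Odd n) :
    (Tset (dPerm n h ho)).card = n - 3 := by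
  unfold dPerm
  rw [Tset_mkPerm]
  have he : (Finset.univ.filter (fun i : Fin n => df n i ≠ (i:ℕ) ∧ df n (df n i) = (i:ℕ))) =
      (Finset.univ.filter (fun i : Fin n => (i:ℕ) < n-3)) := by
    apply Finset.filter_congr
    intro i _
    have := i.isLt
    obtain ⟨k, hk⟩ := ho
    unfold df pf c3; split_ifs <;> first | omega | exact ‹False›.elim
  rw [he, card_filter_val_lt n _ (by omega)]

lemma numFixedPoints_one (n : ℕ) : numFixedPoints (1 : Equiv.Perm (Fin n)) = n := by
  unfold numFixedPoints
  simp

lemma ne_one_of_fixed {n : ℕ} (σ : Equiv.Perm (Fin n)) (h : numFixedPoints σ ≠ n) :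
    σ ≠ 1 := fun he => h (by rw [he, numFixedPoints_one])

lemma unique_max_extreme (s : Finset (ℝ × ℝ)) (a b : ℝ) (v : ℝ × ℝ) (hv : v ∈ s)
    (h : ∀ w ∈ s, w ≠ v → a * w.1 + b * w.2 < a * v.1 + b * v.2) :
    v ∈ (convexHull ℝ (s : Set (ℝ × ℝ))).extremePoints ℝ := by
  classical
  set L : (ℝ × ℝ) →ₗ[ℝ] ℝ :=
    { toFun := fun w => a * w.1 + b * w.2
      map_add' := fun x y => by simp [Prod.fst_add, Prod.snd_add]; ring
      map_smul' := fun c x => by simp [Prod.smul_fst, Prod.smul_snd]; ring } with hLdef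
  have hLw : ∀ w : ℝ × ℝ, L w = a * w.1 + b * w.2 := fun w => rfl
  have hle : ∀ w ∈ s, L w ≤ L v := by
    intro w hw
    by_cases hwv : w = v
    · rw [hwv]
    · exact (h w hw hwv).le
  have hhull : convexHull ℝ (s : Set (ℝ × ℝ)) ⊆ {w | L w ≤ L v} := by
    apply convexHull_min
    · intro w hw
      exact hle w hw
    · exact convex_halfSpace_le (LinearMap.isLinear L) _
  have key : ∀ z ∈ convexHull ℝ (s : Set (ℝ × ℝ)), L z = L v → z = v := by
    intro z hz hlz
    rw [Finset.convexHull_eq] at hz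
    obtain ⟨w, hw0, hw1, hwz⟩ := hz
    rw [Finset.centerMass_eq_of_sum_1 _ _ hw1] at hwz
    have hzero : ∀ u ∈ s, u ≠ v → w u = 0 := by
      by_contra hcon
      push_neg at hcon
      obtain ⟨u0, hu0s, hu0v, hu0⟩ := hcon
      have hu0pos : 0 < w u0 := lt_of_le_of_ne (hw0 u0 hu0s) (Ne.symm hu0)
      have hlt : ∑ u ∈ s, w u * L u < ∑ u ∈ s, w u * L v := by
        apply Finset.sum_lt_sum
        · intro u hu
          exact mul_le_mul_of_nonneg_left (hle u hu) (hw0 u hu)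
        · exact ⟨u0, hu0s, mul_lt_mul_of_pos_left (h u0 hu0s hu0v) hu0pos⟩
      have hLz : L z = ∑ u ∈ s, w u * L u := by
        rw [← hwz, map_sum]
        exact Finset.sum_congr rfl fun u _ => by rw [map_smul, smul_eq_mul, id]
      rw [← Finset.sum_mul, hw1, one_mul] at hlt
      rw [hLz] at hlz
      exact absurd hlz (ne_of_lt hlt)
    have hwv1 : w v = 1 := by
      rw [← hw1]
      exact (Finset.sum_eq_single v (fun u hu hne => hzero u hu hne)
        (fun hns => absurd hv hns)).symm
    rw [← hwz]
    rw [Finset.sum_eq_single v (fun u hu hne => by rw [hzero u hu hne, zero_smul])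
      (fun hns => absurd hv hns)]
    simp [hwv1]
  refine ⟨subset_convexHull ℝ _ hv, ?_⟩
  intro x1 h1 x2 h2 hseg
  obtain ⟨α, β, hα, hβ, hαβ, hsum⟩ := hseg
  have e1 : L x1 ≤ L v := hhull h1
  have e2 : L x2 ≤ L v := hhull h2
  have hv' : α * L x1 + β * L x2 = L v := by
    rw [← hsum, map_add, map_smul, map_smul, smul_eq_mul, smul_eq_mul]
  have hx1 : L x1 = L v := by
    rcases lt_or_eq_of_le e1 with hlt | he
    · exfalso
      have q1 := mul_lt_mul_of_pos_left hlt hα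
      have q2 := mul_le_mul_of_nonneg_left e2 hβ.le
      have q3 : α * L v + β * L v = L v := by rw [← add_mul, hαβ, one_mul]
      linarith
    · exact he
  have hx2 : L x2 = L v := by
    rcases lt_or_eq_of_le e2 with hlt | he
    · exfalso
      have q1 := mul_lt_mul_of_pos_left hlt hβ
      have q2 := mul_le_mul_of_nonneg_left e1 hα.le
      have q3 : α * L v + β * L v = L v := by rw [← add_mul, hαβ, one_mul]
      linarith
    · exact he
  exact key x1 h1 hx1

set_option maxHeartbeats 2000000 in
theorem stmt_15 (n : ℕ) (hn : 5 ≤ n) (hno : Odd n)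
    (S : Set (ℝ × ℝ))
    (hS : S = {x : ℝ × ℝ | ∃ σ : Equiv.Perm (Fin n), σ ≠ 1 ∧
      x = ((numFixedPoints σ : ℝ),
            2 * (numTwoCycles σ : ℝ) / ((n : ℝ) - (numFixedPoints σ : ℝ)))}) :
    Set.extremePoints ℝ (convexHull ℝ S) =
      {((0 : ℝ), (0 : ℝ)), ((n : ℝ) - 3, (0 : ℝ)), ((n : ℝ) - 2, (1 : ℝ)),
        ((0 : ℝ), ((n : ℝ) - 3) / (n : ℝ)), ((1 : ℝ), (1 : ℝ))} := by
  classical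
  obtain ⟨k, hk⟩ := hno
  have hnR : (5:ℝ) ≤ (n:ℝ) := by exact_mod_cast hn
  have hn0 : (0:ℝ) < (n:ℝ) := by linarith
  have hd0 : 0 < ((n:ℝ)-3)/(n:ℝ) := div_pos (by linarith) hn0
  have hd1 : ((n:ℝ)-3)/(n:ℝ) < 1 := by rw [div_lt_one hn0]; linarith
  set A : ℝ × ℝ := ((0:ℝ), (0:ℝ)) with hA
  set B : ℝ × ℝ := ((n:ℝ)-3, (0:ℝ)) with hB
  set C : ℝ × ℝ := ((n:ℝ)-2, (1:ℝ)) with hC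
  set D : ℝ × ℝ := ((0:ℝ), ((n:ℝ)-3)/(n:ℝ)) with hD
  set E : ℝ × ℝ := ((1:ℝ), (1:ℝ)) with hE
  set V : Finset (ℝ × ℝ) := {A, B, C, D, E} with hVdef
  have hVcoe : (V : Set (ℝ × ℝ)) = {A, B, C, D, E} := by
    rw [hVdef]; simp
  clear_value A B C D E V
  have hAV : A ∈ (V : Set (ℝ×ℝ)) := by rw [hVcoe]; simp
  have hBV : B ∈ (V : Set (ℝ×ℝ)) := by rw [hVcoe]; simp
  have hCV : C ∈ (V : Set (ℝ×ℝ)) := by rw [hVcoe]; simp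
  have hDV : D ∈ (V : Set (ℝ×ℝ)) := by rw [hVcoe]; simp
  have hEV : E ∈ (V : Set (ℝ×ℝ)) := by rw [hVcoe]; simp
  have hcvx := convex_convexHull ℝ (V : Set (ℝ × ℝ))
  have hAh := subset_convexHull ℝ (V : Set (ℝ×ℝ)) hAV
  have hBh := subset_convexHull ℝ (V : Set (ℝ×ℝ)) hBV
  have hCh := subset_convexHull ℝ (V : Set (ℝ×ℝ)) hCV
  have hDh := subset_convexHull ℝ (V : Set (ℝ×ℝ)) hDV
  have hEh := subset_convexHull ℝ (V : Set (ℝ×ℝ)) hEV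
  -- Step I : S ⊆ convexHull V
  have hSsub : S ⊆ convexHull ℝ (V : Set (ℝ × ℝ)) := by
    rw [hS]
    rintro x ⟨σ, hσ1, rfl⟩
    have hpart : numFixedPoints σ + 2 * numTwoCycles σ + (Lset σ).card = n := by
      rw [← card_Tset]; exact partition_card σ
    have hl := Lset_card σ
    have hple := fixed_le σ hσ1
    set p := numFixedPoints σ with hp
    set t := numTwoCycles σ with ht
    clear_value p t
    have hpR : ((p:ℝ)) + 2 ≤ (n:ℝ) := by exact_mod_cast hple
    have htR0 : (0:ℝ) ≤ 2*(t:ℝ) := by positivity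
    rcases hl with hl0 | hl3
    · -- all non-fixed points in 2-cycles : second coordinate is 1
      have hpn : p + 2*t = n := by omega
      have hp1 : 1 ≤ p := by omega
      have hp1R : (1:ℝ) ≤ (p:ℝ) := by exact_mod_cast hp1
      have h2t : 2*(t:ℝ) = (n:ℝ) - (p:ℝ) := by
        have : (p:ℝ) + 2*(t:ℝ) = (n:ℝ) := by exact_mod_cast hpn
        linarith
      have hy : 2*(t:ℝ)/((n:ℝ)-(p:ℝ)) = 1 := by
        rw [h2t]; exact div_self (by linarith)
      have hpt : ((p:ℝ), 2*(t:ℝ)/((n:ℝ)-(p:ℝ))) = ((p:ℝ), (1:ℝ)) := by rw [hy]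
      rw [hpt]
      refine hcvx.segment_subset hEh hCh ?_
      refine ⟨1 - ((p:ℝ)-1)/((n:ℝ)-3), ((p:ℝ)-1)/((n:ℝ)-3), ?_, ?_, by ring, ?_⟩
      · have : ((p:ℝ)-1)/((n:ℝ)-3) ≤ 1 := by
          rw [div_le_one (by linarith)]; linarith
        linarith
      · exact div_nonneg (by linarith) (by linarith)
      · rw [hE, hC]
        have hne3 : (n:ℝ)-3 ≠ 0 := by linarith
        simp only [Prod.smul_mk, smul_eq_mul, Prod.mk_add_mk, Prod.mk.injEq]
        constructor
        · field_simp
          ring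
        · ring
    · -- at least three points in longer cycles
      have hp3 : p + 3 ≤ n := by omega
      have h2t3 : (p:ℕ) + 2*t + 3 ≤ n := by omega
      have hp3R : (p:ℝ) ≤ (n:ℝ) - 3 := by
        have : ((p:ℝ)) + 3 ≤ (n:ℝ) := by exact_mod_cast hp3
        linarith
      have h2t3R : 2*(t:ℝ) ≤ (n:ℝ) - (p:ℝ) - 3 := by
        have : ((p:ℝ)) + 2*(t:ℝ) + 3 ≤ (n:ℝ) := by exact_mod_cast h2t3
        linarith
      have hpR0 : (0:ℝ) ≤ (p:ℝ) := by positivity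
      have hm : (0:ℝ) < (n:ℝ) - (p:ℝ) := by linarith
      set u : ℝ := (p:ℝ)/((n:ℝ)-2) with hu
      clear_value u
      set Lv : ℝ := (1-u)*(((n:ℝ)-3)/(n:ℝ)) + u*1 with hLv
      clear_value Lv
      have hn2ne : ((n:ℝ)-2) ≠ 0 := by linarith
      have hnne : (n:ℝ) ≠ 0 := by linarith
      have hu0 : 0 ≤ u := by rw [hu]; exact div_nonneg hpR0 (by linarith)
      have hu1 : u ≤ 1 := by
        rw [hu, div_le_one (by linarith)]; linarith
      have hLv_eq : Lv * ((n:ℝ)*((n:ℝ)-2)) = (((n:ℝ)-3)*((n:ℝ)-2) + 3*(p:ℝ)) := by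
        rw [hLv, hu]
        field_simp
        ring
      have hnn2 : (0:ℝ) < (n:ℝ)*((n:ℝ)-2) := by nlinarith
      have hLpos : 0 < Lv := by
        nlinarith [hLv_eq]
      have hyle : 2*(t:ℝ)/((n:ℝ)-(p:ℝ)) ≤ Lv := by
        rw [div_le_iff₀ hm]
        have hmul : (Lv * ((n:ℝ)-(p:ℝ))) * ((n:ℝ)*((n:ℝ)-2)) =
            (((n:ℝ)-3)*((n:ℝ)-2) + 3*(p:ℝ)) * ((n:ℝ)-(p:ℝ)) := by
          calc (Lv * ((n:ℝ)-(p:ℝ))) * ((n:ℝ)*((n:ℝ)-2))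
              = (Lv * ((n:ℝ)*((n:ℝ)-2))) * ((n:ℝ)-(p:ℝ)) := by ring
            _ = (((n:ℝ)-3)*((n:ℝ)-2) + 3*(p:ℝ)) * ((n:ℝ)-(p:ℝ)) := by rw [hLv_eq]
        have hkey : 2*(t:ℝ) * ((n:ℝ)*((n:ℝ)-2)) ≤
            (Lv * ((n:ℝ)-(p:ℝ))) * ((n:ℝ)*((n:ℝ)-2)) := by
          rw [hmul]
          nlinarith [mul_nonneg hpR0 (by linarith : (0:ℝ) ≤ 2*(n:ℝ)-2-(p:ℝ)),
            mul_le_mul_of_nonneg_right h2t3R hnn2.le]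
        exact le_of_mul_le_mul_right hkey hnn2
      set y : ℝ := 2*(t:ℝ)/((n:ℝ)-(p:ℝ)) with hy
      clear_value y
      have hy0 : 0 ≤ y := by rw [hy]; exact div_nonneg htR0 hm.le
      set sc : ℝ := y / Lv with hsc
      clear_value sc
      have hLne : Lv ≠ 0 := ne_of_gt hLpos
      have hsc0 : 0 ≤ sc := by rw [hsc]; exact div_nonneg hy0 hLpos.le
      have hsc1 : sc ≤ 1 := by rw [hsc, div_le_one hLpos]; exact hyle
      -- P1 on the bottom edge
      have hP1 : ((p:ℝ), (0:ℝ)) ∈ convexHull ℝ (V : Set (ℝ×ℝ)) := by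
        refine hcvx.segment_subset hAh hBh ⟨1 - (p:ℝ)/((n:ℝ)-3), (p:ℝ)/((n:ℝ)-3), ?_, ?_, by ring, ?_⟩
        · have : (p:ℝ)/((n:ℝ)-3) ≤ 1 := by rw [div_le_one (by linarith)]; linarith
          linarith
        · exact div_nonneg hpR0 (by linarith)
        · rw [hA, hB]
          simp only [Prod.smul_mk, smul_eq_mul, Prod.mk_add_mk, Prod.mk.injEq]
          constructor
          · rw [mul_zero, zero_add, div_mul_cancel₀ _ (show ((n:ℝ)-3) ≠ 0 by linarith)]
          · ring
      -- P2 on the segment from D to C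
      have hP2 : ((p:ℝ), Lv) ∈ convexHull ℝ (V : Set (ℝ×ℝ)) := by
        refine hcvx.segment_subset hDh hCh ⟨1 - u, u, by linarith, hu0, by ring, ?_⟩
        rw [hD, hC]
        simp only [Prod.smul_mk, smul_eq_mul, Prod.mk_add_mk, Prod.mk.injEq]
        constructor
        · rw [mul_zero, zero_add, hu, div_mul_cancel₀ _ hn2ne]
        · rw [hLv]
      refine hcvx.segment_subset hP1 hP2 ⟨1 - sc, sc, by linarith, hsc0, by ring, ?_⟩
      simp only [Prod.smul_mk, smul_eq_mul, Prod.mk_add_mk, Prod.mk.injEq]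
      constructor
      · ring
      · rw [mul_zero, zero_add, hsc, div_mul_cancel₀ _ hLne]
  -- Step II : V ⊆ S
  have hVsub : (V : Set (ℝ × ℝ)) ⊆ S := by
    rw [hVcoe, hS]
    intro x hx
    simp only [Set.mem_insert_iff, Set.mem_singleton_iff] at hx
    rcases hx with rfl | rfl | rfl | rfl | rfl
    · -- A : the n-cycle
      refine ⟨rotPerm n (by omega), ne_one_of_fixed _ ?_, ?_⟩
      · rw [numFixedPoints_rotPerm n (by omega)]; omega
      · have h1 := numFixedPoints_rotPerm n (by omega) (by omega : 1 ≤ n)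
        have h2 := card_Tset (rotPerm n (by omega : 1 ≤ n))
        rw [card_Tset_rotPerm n (by omega)] at h2
        have h3 : numTwoCycles (rotPerm n (by omega : 1 ≤ n)) = 0 := by omega
        rw [hA, h1, h3]
        norm_num
    · -- B : a 3-cycle
      refine ⟨cyc3 n (by omega), ne_one_of_fixed _ ?_, ?_⟩
      · rw [numFixedPoints_cyc3 n (by omega)]; omega
      · have h1 := numFixedPoints_cyc3 n (by omega : 3 ≤ n)
        have h2 := card_Tset (cyc3 n (by omega : 3 ≤ n))
        rw [card_Tset_cyc3 n (by omega)] at h2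
        have h3 : numTwoCycles (cyc3 n (by omega : 3 ≤ n)) = 0 := by omega
        rw [hB, h1, h3]
        have : ((n - 3 : ℕ) : ℝ) = (n:ℝ) - 3 := by
          push_cast [Nat.cast_sub (by omega : 3 ≤ n)]; ring
        rw [this]
        norm_num
    · -- C : a transposition
      refine ⟨pairPerm n 1 (by omega), ne_one_of_fixed _ ?_, ?_⟩
      · rw [numFixedPoints_pairPerm n 1 (by omega)]; omega
      · have h1 := numFixedPoints_pairPerm n 1 (by omega : 2*1 ≤ n)
        have h2 := card_Tset (pairPerm n 1 (by omega : 2*1 ≤ n))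
        rw [card_Tset_pairPerm n 1 (by omega)] at h2
        have h3 : numTwoCycles (pairPerm n 1 (by omega : 2*1 ≤ n)) = 1 := by omega
        rw [hC, h1, h3]
        have hcast : ((n - 2*1 : ℕ) : ℝ) = (n:ℝ) - 2 := by
          push_cast [Nat.cast_sub (by omega : 2*1 ≤ n)]; ring
        rw [hcast, Prod.mk.injEq]
        refine ⟨rfl, ?_⟩
        have h4 : (n:ℝ) - ((n:ℝ)-2) = 2 := by ring
        rw [h4]
        norm_num
    · -- D : 3-cycle times (n-3)/2 transpositions
      refine ⟨dPerm n hn ⟨k, hk⟩, ne_one_of_fixed _ ?_, ?_⟩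
      · rw [numFixedPoints_dPerm n hn ⟨k, hk⟩]; omega
      · have h1 := numFixedPoints_dPerm n hn ⟨k, hk⟩
        have h2 := card_Tset (dPerm n hn ⟨k, hk⟩)
        rw [card_Tset_dPerm n hn ⟨k, hk⟩] at h2
        have h2R : 2 * (numTwoCycles (dPerm n hn ⟨k, hk⟩) : ℝ) = (n:ℝ) - 3 := by
          have : ((n - 3 : ℕ) : ℝ) = (n:ℝ) - 3 := by
            push_cast [Nat.cast_sub (by omega : 3 ≤ n)]; ring
          rw [← this]
          exact_mod_cast h2.symm
        rw [hD, h1]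
        rw [Prod.mk.injEq]
        constructor
        · norm_num
        · rw [Nat.cast_zero, sub_zero, h2R]
    · -- E : (n-1)/2 transpositions
      have hkn : 2*k ≤ n := by omega
      refine ⟨pairPerm n k hkn, ne_one_of_fixed _ ?_, ?_⟩
      · rw [numFixedPoints_pairPerm n k hkn]; omega
      · have h1 := numFixedPoints_pairPerm n k hkn
        have h1' : numFixedPoints (pairPerm n k hkn) = 1 := by omega
        have h2 := card_Tset (pairPerm n k hkn)
        rw [card_Tset_pairPerm n k hkn] at h2
        have h2R : 2 * (numTwoCycles (pairPerm n k hkn) : ℝ) = (n:ℝ) - 1 := by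
          have hnk : (2*k : ℕ) = n - 1 := by omega
          rw [hnk] at h2
          have : ((n - 1 : ℕ) : ℝ) = (n:ℝ) - 1 := by
            push_cast [Nat.cast_sub (by omega : 1 ≤ n)]; ring
          rw [← this]
          exact_mod_cast h2.symm
        rw [hE, h1']
        rw [Prod.mk.injEq]
        constructor
        · norm_num
        · rw [Nat.cast_one, h2R]
          rw [div_self (by linarith : (n:ℝ) - 1 ≠ 0)]
  -- hulls agree
  have hull_eq : convexHull ℝ S = convexHull ℝ (V : Set (ℝ × ℝ)) :=
    Set.Subset.antisymm (convexHull_min hSsub hcvx) (convexHull_mono hVsub)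
  rw [hull_eq]
  apply Set.Subset.antisymm
  · intro x hx
    have := extremePoints_convexHull_subset hx
    rw [hVcoe] at this
    exact this
  · intro x hx
    simp only [Set.mem_insert_iff, Set.mem_singleton_iff] at hx
    have hAm : A ∈ V := by rw [hVdef]; simp
    have hBm : B ∈ V := by rw [hVdef]; simp
    have hCm : C ∈ V := by rw [hVdef]; simp
    have hDm : D ∈ V := by rw [hVdef]; simp
    have hEm : E ∈ V := by rw [hVdef]; simp
    have hmem : ∀ w ∈ V, w = A ∨ w = B ∨ w = C ∨ w = D ∨ w = E := by
      intro w hw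
      rw [hVdef] at hw
      simpa using hw
    have hnmul : (n:ℝ)*(((n:ℝ)-3)/(n:ℝ)) = (n:ℝ)-3 := by field_simp
    rcases hx with rfl | rfl | rfl | rfl | rfl
    · refine unique_max_extreme V (-1) (-1) x hAm ?_
      intro w hw hne
      rcases hmem w hw with rfl | rfl | rfl | rfl | rfl
      · exact absurd rfl hne
      · rw [hA, hB]; norm_num <;> linarith [hd0, hd1]
      · rw [hA, hC]; norm_num <;> linarith [hd0, hd1]
      · rw [hA, hD]; norm_num <;> linarith [hd0, hd1]
      · rw [hA, hE]; norm_num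
    · refine unique_max_extreme V 1 (-2) x hBm ?_
      intro w hw hne
      rcases hmem w hw with rfl | rfl | rfl | rfl | rfl
      · rw [hA, hB]; norm_num <;> linarith [hd0, hd1]
      · exact absurd rfl hne
      · rw [hB, hC]; norm_num <;> linarith [hd0, hd1]
      · rw [hB, hD]; norm_num <;> linarith [hd0, hd1]
      · rw [hB, hE]; norm_num <;> linarith [hd0, hd1]
    · refine unique_max_extreme V 1 2 x hCm ?_
      intro w hw hne
      rcases hmem w hw with rfl | rfl | rfl | rfl | rfl
      · rw [hA, hC]; norm_num <;> linarith [hd0, hd1]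
      · rw [hB, hC]; norm_num <;> linarith [hd0, hd1]
      · exact absurd rfl hne
      · rw [hC, hD]; norm_num <;> linarith [hd0, hd1]
      · rw [hC, hE]; norm_num <;> linarith [hd0, hd1]
    · refine unique_max_extreme V (-1) 1 x hDm ?_
      intro w hw hne
      rcases hmem w hw with rfl | rfl | rfl | rfl | rfl
      · rw [hA, hD]; norm_num <;> linarith [hd0, hd1]
      · rw [hB, hD]; norm_num <;> linarith [hd0, hd1]
      · rw [hC, hD]; norm_num <;> linarith [hd0, hd1]
      · exact absurd rfl hne
      · rw [hD, hE]; norm_num <;> linarith [hd0, hd1]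
    · refine unique_max_extreme V (-1) (n:ℝ) x hEm ?_
      intro w hw hne
      rcases hmem w hw with rfl | rfl | rfl | rfl | rfl
      · rw [hA, hE]; norm_num <;> linarith [hd0, hd1]
      · rw [hB, hE]; norm_num <;> linarith [hd0, hd1]
      · rw [hC, hE]; norm_num <;> linarith [hd0, hd1]
      · rw [hD, hE]; norm_num <;> linarith [hnmul]
      · exact absurd rfl hne
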